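/- arXiv:1607.07543 — 2 statements merged into one kernel-verified Lean document; each statement's English description precedes it below -/
import Mathlib

section
/- (Finite-time zeroing comparison lemma.) Let z : ℝ → ℝ be differentiable, let t₀ ∈ ℝ and c > 0, and suppose that for every t ≥ t₀: if z(t) > 0 then z′(t) ≤ −c, and if z(t) < 0 then z′(t) ≥ c. Then z(t) = 0 for every t ≥ t₀ + |z(t₀)|/c. -/
/-!
On every stretch where `z > 0` the mean value theorem makes `z` decrease at rate at least `c`.
Measuring from the last point before `t` where `z ≤ 0` (or from `t₀` if there is none) shows
`z t ≤ max 0 (z t₀ - c (t - t₀))`, which is `≤ 0` once `t ≥ t₀ + |z t₀| / c`. The same bound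
for `-z` gives `z t ≥ 0`.
-/

open Set

lemma exists_nonpos_forall_pos_Ioc {z : ℝ → ℝ} {a b : ℝ} (hz : ContinuousOn z (Icc a b))
    (h : ∃ s ∈ Icc a b, z s ≤ 0) : ∃ u ∈ Icc a b, z u ≤ 0 ∧ ∀ s ∈ Ioc u b, 0 < z s := by
  have hclosed : IsClosed (Icc a b ∩ z ⁻¹' Iic 0) :=
    hz.preimage_isClosed_of_isClosed isClosed_Icc isClosed_Iic
  obtain ⟨u, ⟨hu, hzu⟩, hlast⟩ :=
    (isCompact_Icc.of_isClosed_subset hclosed inter_subset_left).exists_isGreatest h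
  refine ⟨u, hu, hzu, fun s ⟨hus, hsb⟩ => ?_⟩
  by_contra! hzs
  exact (hlast ⟨⟨hu.1.trans hus.le, hsb⟩, hzs⟩).not_gt hus

lemma sub_le_neg_mul_sub_of_deriv_le_neg {z : ℝ → ℝ} (hz : Differentiable ℝ z) {a b c : ℝ}
    (hab : a ≤ b) (hderiv : ∀ s ∈ Ioo a b, deriv z s ≤ -c) : z b - z a ≤ -c * (b - a) := by
  refine (convex_Icc a b).image_sub_le_mul_sub_of_deriv_le hz.continuous.continuousOn
    hz.differentiableOn (fun s hs => hderiv s ?_) a (left_mem_Icc.2 hab) b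
    (right_mem_Icc.2 hab) hab
  rwa [interior_Icc] at hs

lemma le_max_zero_sub_mul_of_deriv_le_neg {z : ℝ → ℝ} (hz : Differentiable ℝ z) {t₀ c : ℝ}
    (hc : 0 ≤ c) (hpos : ∀ t, t₀ ≤ t → 0 < z t → deriv z t ≤ -c) {t : ℝ} (ht : t₀ ≤ t) :
    z t ≤ max 0 (z t₀ - c * (t - t₀)) := by
  by_cases hzt : z t ≤ 0
  · exact hzt.trans (le_max_left _ _)
  by_cases hzero : ∃ s ∈ Icc t₀ t, z s ≤ 0
  · obtain ⟨u, ⟨hu₀, hut⟩, hzu, hposu⟩ :=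
      exists_nonpos_forall_pos_Ioc hz.continuous.continuousOn hzero
    have := sub_le_neg_mul_sub_of_deriv_le_neg hz hut fun s hs =>
      hpos s (hu₀.trans hs.1.le) (hposu s ⟨hs.1, hs.2.le⟩)
    nlinarith [sub_nonneg.2 hut]
  · push Not at hzero
    have := sub_le_neg_mul_sub_of_deriv_le_neg hz ht fun s hs =>
      hpos s hs.1.le (hzero s ⟨hs.1.le, hs.2.le⟩)
    exact le_max_of_le_right (by linarith)

lemma nonpos_of_deriv_le_neg {z : ℝ → ℝ} (hz : Differentiable ℝ z) {t₀ c : ℝ} (hc : 0 < c)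
    (hpos : ∀ t, t₀ ≤ t → 0 < z t → deriv z t ≤ -c) {t : ℝ} (ht : t₀ + |z t₀| / c ≤ t) :
    z t ≤ 0 := by
  have hlate : |z t₀| ≤ c * (t - t₀) := by
    rw [← div_le_iff₀' hc]
    linarith
  have ht₀ : t₀ ≤ t := by linarith [div_nonneg (abs_nonneg (z t₀)) hc.le]
  calc z t ≤ max 0 (z t₀ - c * (t - t₀)) := le_max_zero_sub_mul_of_deriv_le_neg hz hc.le hpos ht₀
    _ = 0 := max_eq_left (by linarith [le_abs_self (z t₀)])

/-- Finite-time zeroing comparison lemma: if `z` is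
differentiable, `c > 0`, and for every `t ≥ t₀` we have `z′(t) ≤ −c` whenever
`z(t) > 0` and `z′(t) ≥ c` whenever `z(t) < 0`, then `z(t) = 0` for every
`t ≥ t₀ + |z(t₀)|/c`. -/
theorem stmt_13 (z : ℝ → ℝ) (hz : Differentiable ℝ z) (t₀ c : ℝ) (hc : 0 < c)
    (hpos : ∀ t, t₀ ≤ t → 0 < z t → deriv z t ≤ -c)
    (hneg : ∀ t, t₀ ≤ t → z t < 0 → c ≤ deriv z t) :
    ∀ t, t₀ + |z t₀| / c ≤ t → z t = 0 := by
  intro t ht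
  have hneg' : ∀ s, t₀ ≤ s → 0 < (-z) s → deriv (-z) s ≤ -c := fun s hs hzs => by
    rw [deriv.neg, neg_le_neg_iff]
    exact hneg s hs (neg_pos.1 hzs)
  have hle : z t ≤ 0 := nonpos_of_deriv_le_neg hz hc hpos ht
  have hge : (-z) t ≤ 0 := nonpos_of_deriv_le_neg hz.neg hc hneg' (by simpa using ht)
  linarith [show (-z) t = -z t from rfl]
end

section
/- (Settle time of a scalar sliding-mode estimator tracking a pinned leader.) Let ẑ, r : ℝ → ℝ be differentiable, let t₀ ∈ ℝ, and let 0 ≤ γ < β be constants with |r′(t)| ≤ γ for all t ≥ t₀. Suppose that for every t ≥ t₀ with ẑ(t) ≠ r(t), the estimator satisfies ẑ′(t) = −β · sgn(ẑ(t) − r(t)). Then ẑ(t) = r(t) for every t ≥ t₀ + |ẑ(t₀) − r(t₀)|/(β − γ); i.e. the estimator reaches the leader signal in finite time with settle time at most t₀ + |ẑ(t₀) − r(t₀)|/(β − γ). -/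
/-- Half lemma: if `e` decreases at rate at least `c` whenever it is positive
(for `t ≥ t₀`), then `e b ≤ max (e t₀ - c * (b - t₀)) 0` for all `b ≥ t₀`. -/
lemma stmt_14_half (e : ℝ → ℝ) (he : Differentiable ℝ e) (t₀ c : ℝ) (hc : 0 < c)
    (hd : ∀ t, t₀ ≤ t → 0 < e t → deriv e t ≤ -c) :
    ∀ b, t₀ ≤ b → e b ≤ max (e t₀ - c * (b - t₀)) 0 := by
  intro b hb
  rcases le_or_gt (e b) 0 with h | h
  · exact h.trans (le_max_right _ _)
  · -- antitone sub-claim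
    have anti : ∀ a, t₀ ≤ a → a ≤ b → (∀ x ∈ Set.Ioo a b, 0 < e x) →
        e b ≤ e a - c * (b - a) := by
      intro a ha hab hpos
      have hcont : ContinuousOn (fun t => e t + c * t) (Set.Icc a b) :=
        (he.continuous.add (continuous_const.mul continuous_id)).continuousOn
      have hder : ∀ x ∈ interior (Set.Icc a b),
          deriv (fun t => e t + c * t) x ≤ 0 := by
        intro x hx
        rw [interior_Icc] at hx
        have hdx : deriv (fun t => e t + c * t) x = deriv e x + c := by
          have h1 : HasDerivAt (fun t => e t + c * t) (deriv e x + c * 1) x :=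
            ((he x).hasDerivAt).add ((hasDerivAt_id x).const_mul c)
          rw [h1.deriv]; ring
        have hle := hd x (ha.trans hx.1.le) (hpos x hx)
        rw [hdx]; linarith
      have hdiff : DifferentiableOn ℝ (fun t => e t + c * t)
          (interior (Set.Icc a b)) :=
        (he.add ((differentiable_const c).mul differentiable_id)).differentiableOn
      have hA := antitoneOn_of_deriv_nonpos (convex_Icc a b) hcont hdiff hder
        (Set.left_mem_Icc.2 hab) (Set.right_mem_Icc.2 hab) hab
      simp only at hA
      linarith
    by_cases hS : ∃ s ∈ Set.Icc t₀ b, e s = 0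
    · obtain ⟨s₀, hs₀, hes₀⟩ := hS
      set S : Set ℝ := Set.Icc t₀ b ∩ e ⁻¹' {0} with hSdef
      have hclosed : IsClosed S :=
        isClosed_Icc.inter (isClosed_singleton.preimage he.continuous)
      have hcomp : IsCompact S :=
        isCompact_Icc.of_isClosed_subset hclosed Set.inter_subset_left
      have hne : S.Nonempty := ⟨s₀, hs₀, hes₀⟩
      obtain ⟨s, hsS, hsmax⟩ := hcomp.exists_isGreatest hne
      obtain ⟨⟨hts, hsb⟩, hes⟩ := hsS
      have hes0 : e s = 0 := hes
      have hsb' : s < b := lt_of_le_of_ne hsb (by rintro rfl; linarith)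
      have hpos : ∀ x ∈ Set.Ioo s b, 0 < e x := by
        rintro x ⟨hx1, hx2⟩
        by_contra hnp
        push_neg at hnp
        have h0 : (0 : ℝ) ∈ Set.Icc (e x) (e b) := ⟨hnp, h.le⟩
        obtain ⟨y, hy, hey⟩ := intermediate_value_Icc hx2.le
          he.continuous.continuousOn h0
        have hyS : y ∈ S := ⟨⟨hts.trans (hx1.le.trans hy.1), hy.2⟩, hey⟩
        have h1 : y ≤ s := hsmax hyS
        have h2 : x ≤ y := hy.1
        linarith
      have := anti s hts hsb'.le hpos
      have : e b ≤ -(c * (b - s)) := by rw [hes0] at this; linarith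
      nlinarith
    · push_neg at hS
      have hpos : ∀ x ∈ Set.Ioo t₀ b, 0 < e x := by
        rintro x ⟨hx1, hx2⟩
        rcases lt_trichotomy (e x) 0 with hneg | h0 | hp
        · exfalso
          have h0 : (0 : ℝ) ∈ Set.Icc (e x) (e b) := ⟨hneg.le, h.le⟩
          obtain ⟨y, hy, hey⟩ := intermediate_value_Icc hx2.le
            he.continuous.continuousOn h0
          exact hS y ⟨hx1.le.trans hy.1, hy.2⟩ hey
        · exact absurd h0 (hS x ⟨hx1.le, hx2.le⟩)
        · exact hp
      have := anti t₀ le_rfl hb hpos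
      exact this.trans (le_max_left _ _)

/-- Settle time of a scalar sliding-mode estimator tracking a
pinned leader: if `|r′(t)| ≤ γ` for all `t ≥ t₀` with `0 ≤ γ < β`, and the
estimator satisfies `ẑ′(t) = −β · sgn(ẑ(t) − r(t))` whenever `ẑ(t) ≠ r(t)`
(for `t ≥ t₀`), then `ẑ(t) = r(t)` for every
`t ≥ t₀ + |ẑ(t₀) − r(t₀)|/(β − γ)`. -/
theorem stmt_14 (zhat r : ℝ → ℝ) (hzhat : Differentiable ℝ zhat)
    (hr : Differentiable ℝ r) (t₀ γ β : ℝ) (hγ : 0 ≤ γ) (hγβ : γ < β)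
    (hrbound : ∀ t, t₀ ≤ t → |deriv r t| ≤ γ)
    (hest : ∀ t, t₀ ≤ t → zhat t ≠ r t →
      deriv zhat t = -β * Real.sign (zhat t - r t)) :
    ∀ t, t₀ + |zhat t₀ - r t₀| / (β - γ) ≤ t → zhat t = r t := by
  set c := β - γ with hcdef
  have hc : 0 < c := by simp [hcdef]; linarith
  set e : ℝ → ℝ := fun t => zhat t - r t with hedef
  have he : Differentiable ℝ e := hzhat.sub hr
  have hde : ∀ t, deriv e t = deriv zhat t - deriv r t := fun t =>
    deriv_sub (hzhat t) (hr t)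
  set f : ℝ → ℝ := fun t => r t - zhat t with hfdef
  have hf : Differentiable ℝ f := hr.sub hzhat
  have hdf : ∀ t, deriv f t = deriv r t - deriv zhat t := fun t =>
    deriv_sub (hr t) (hzhat t)
  have hd : ∀ t, t₀ ≤ t → 0 < e t → deriv e t ≤ -c := by
    intro t ht hpos
    have hne : zhat t ≠ r t := by
      intro hEq; simp [hedef, hEq] at hpos
    have hsgn : Real.sign (zhat t - r t) = 1 := Real.sign_of_pos hpos
    have hz := hest t ht hne
    rw [hsgn] at hz
    have hrb := abs_le.1 (hrbound t ht)
    rw [hde t, hz]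
    simp [hcdef]
    linarith [hrb.1]
  have hd' : ∀ t, t₀ ≤ t → 0 < f t → deriv f t ≤ -c := by
    intro t ht hpos
    have hne : zhat t ≠ r t := by
      intro hEq; simp [hfdef, hEq] at hpos
    have hneg : zhat t - r t < 0 := by simp [hfdef] at hpos; linarith
    have hsgn : Real.sign (zhat t - r t) = -1 := Real.sign_of_neg hneg
    have hz := hest t ht hne
    rw [hsgn] at hz
    have hrb := abs_le.1 (hrbound t ht)
    rw [hdf t, hz]
    simp [hcdef]
    linarith [hrb.2]
  intro t htt
  have hnn : 0 ≤ |e t₀| / c := div_nonneg (abs_nonneg _) hc.le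
  have ht0 : t₀ ≤ t := by
    have : t₀ + |zhat t₀ - r t₀| / (β - γ) = t₀ + |e t₀| / c := rfl
    rw [this] at htt; linarith
  have hbig : |e t₀| ≤ c * (t - t₀) := by
    have : |e t₀| / c ≤ t - t₀ := by
      have : t₀ + |zhat t₀ - r t₀| / (β - γ) = t₀ + |e t₀| / c := rfl
      rw [this] at htt; linarith
    calc |e t₀| = (|e t₀| / c) * c := by field_simp
    _ ≤ (t - t₀) * c := by nlinarith
    _ = c * (t - t₀) := mul_comm _ _
  have h1 := stmt_14_half e he t₀ c hc hd t ht0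
  have h2 := stmt_14_half f hf t₀ c hc hd' t ht0
  have habs1 : e t₀ ≤ |e t₀| := le_abs_self _
  have habs2 : f t₀ ≤ |e t₀| := by
    have : f t₀ = -(e t₀) := by simp [hfdef, hedef]
    rw [this]; exact neg_le_abs _
  have h1' : e t ≤ 0 := h1.trans (max_le (by linarith) le_rfl)
  have h2' : f t ≤ 0 := h2.trans (max_le (by linarith) le_rfl)
  have : e t = 0 := by
    have : f t = -(e t) := by simp [hfdef, hedef]
    rw [this] at h2'; linarith
  simpa [hedef, sub_eq_zero] using this
end
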